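/- arXiv:2408.03425 — 5 statements merged into one kernel-verified Lean document; each statement's English description precedes it below -/
import Mathlib

section
/- Let B be a symmetric real d×d matrix, let μ ∈ ℝ^d, and define f : ℝ^d → ℝ by f(x) = exp(-(1/2)·(x−μ)ᵀ B (x−μ)). For any two distinct indices i ≠ j, the entry B_{ij} equals 0 if and only if there exist positive functions g, h : ℝ^d → ℝ such that g(x) does not depend on the i-th coordinate of x, h(x) does not depend on the j-th coordinate of x, and f(x) = g(x)·h(x) for all x ∈ ℝ^d. -/
open Matrix

/-- For a symmetric matrix `B` and the unnormalized Gaussian density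
`f x = exp (-(1/2) ⬝ (x-μ)ᵀ B (x-μ))`, the entry `B i j` (for `i ≠ j`) vanishes iff `f`
factors as a product of a positive function not depending on coordinate `i` and a positive
function not depending on coordinate `j`. -/
theorem stmt_0 {d : ℕ} (B : Matrix (Fin d) (Fin d) ℝ) (hB : B.IsSymm)
    (μ : Fin d → ℝ) (f : (Fin d → ℝ) → ℝ)
    (hf : ∀ x, f x = Real.exp (-(1 / 2) * ((x - μ) ⬝ᵥ B.mulVec (x - μ))))
    (i j : Fin d) (hij : i ≠ j) :
    B i j = 0 ↔
      ∃ g h : (Fin d → ℝ) → ℝ,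
        (∀ x, 0 < g x) ∧ (∀ x, 0 < h x) ∧
        (∀ x x' : Fin d → ℝ, (∀ k, k ≠ i → x k = x' k) → g x = g x') ∧
        (∀ x x' : Fin d → ℝ, (∀ k, k ≠ j → x k = x' k) → h x = h x') ∧
        (∀ x, f x = g x * h x) := by
  have hBji : B j i = B i j := hB.apply i j
  constructor
  · intro h0
    refine ⟨fun x => Real.exp (-(1/2) * ∑ k, ∑ l,
        if k = i ∨ l = i then 0 else (x k - μ k) * (B k l * (x l - μ l))),
      fun x => Real.exp (-(1/2) * ∑ k, ∑ l,
        if k = i ∨ l = i then (x k - μ k) * (B k l * (x l - μ l)) else 0),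
      fun x => Real.exp_pos _, fun x => Real.exp_pos _, ?_, ?_, ?_⟩
    · intro x x' hxx
      refine congrArg Real.exp (congrArg (fun S => -(1/2) * S) ?_)
      refine Finset.sum_congr rfl fun k _ => Finset.sum_congr rfl fun l _ => ?_
      by_cases hc : k = i ∨ l = i
      · simp [hc]
      · push_neg at hc
        rw [if_neg (by tauto), if_neg (by tauto), hxx k hc.1, hxx l hc.2]
    · intro x x' hxx
      refine congrArg Real.exp (congrArg (fun S => -(1/2) * S) ?_)
      refine Finset.sum_congr rfl fun k _ => Finset.sum_congr rfl fun l _ => ?_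
      by_cases hc : k = i ∨ l = i
      · rw [if_pos hc, if_pos hc]
        by_cases hk : k = j
        · have hl : l = i := hc.resolve_left fun h' => hij (h'.symm.trans hk)
          subst hk; subst hl
          rw [hBji, h0]; ring
        · by_cases hl : l = j
          · have hk' : k = i := hc.resolve_right fun h' => hij (h'.symm.trans hl)
            subst hl; subst hk'
            rw [h0]; ring
          · rw [hxx k hk, hxx l hl]
      · rw [if_neg hc, if_neg hc]
    · intro x
      rw [hf, ← Real.exp_add, ← mul_add, ← Finset.sum_add_distrib]
      have : ∀ k : Fin d, (∑ l, if k = i ∨ l = i then 0 else (x k - μ k) * (B k l * (x l - μ l)))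
          + (∑ l, if k = i ∨ l = i then (x k - μ k) * (B k l * (x l - μ l)) else 0)
          = ∑ l, (x k - μ k) * (B k l * (x l - μ l)) := by
        intro k
        rw [← Finset.sum_add_distrib]
        refine Finset.sum_congr rfl fun l _ => ?_
        by_cases hc : k = i ∨ l = i <;> simp [hc]
      simp only [this]
      congr 1
      have : (x - μ) ⬝ᵥ B.mulVec (x - μ) = ∑ k, ∑ l, (x - μ) k * (B k l * (x - μ) l) := by
        simp [dotProduct, Matrix.mulVec, Finset.mul_sum]
      rw [this]
      simp [Pi.sub_apply]
  · rintro ⟨g, h, hg, hh, hgi, hhj, hfgh⟩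
    set X : ℝ → ℝ → (Fin d → ℝ) := fun s t k =>
      μ k + ((if k = i then s else 0) + (if k = j then t else 0)) with hX
    have hkey : ∀ s t : ℝ, f (X s t) = Real.exp (-(1/2) *
        (s * (B i i * s) + s * (B i j * t) + t * (B j i * s) + t * (B j j * t))) := by
      intro s t
      rw [hf]
      congr 2
      have hy : (X s t - μ) = fun k => (if k = i then s else 0) + (if k = j then t else 0) := by
        funext k; simp [hX]
      rw [hy]
      have : ∀ (y : Fin d → ℝ), y ⬝ᵥ B.mulVec y = ∑ k, ∑ l, y k * (B k l * y l) := by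
        intro y; simp [dotProduct, Matrix.mulVec, Finset.mul_sum]
      rw [this]
      simp only [mul_add, add_mul, mul_ite, ite_mul, mul_zero, zero_mul, Finset.sum_add_distrib,
        Finset.sum_ite_eq', Finset.mem_univ, if_true]
      ring
    have hgs : ∀ s s' t : ℝ, g (X s t) = g (X s' t) := by
      intro s s' t
      refine hgi _ _ fun k hk => ?_
      simp [hX, if_neg hk]
    have hhs : ∀ s t t' : ℝ, h (X s t) = h (X s t') := by
      intro s t t'
      refine hhj _ _ fun k hk => ?_
      simp [hX, if_neg hk]
    have hfac : f (X 1 1) * f (X 0 0) = f (X 1 0) * f (X 0 1) := by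
      rw [hfgh, hfgh, hfgh, hfgh, hgs 1 0 1, hhs 1 1 0, hgs 1 0 0, hhs 0 1 0]
      ring
    rw [hkey, hkey, hkey, hkey, ← Real.exp_add, ← Real.exp_add] at hfac
    have := Real.exp_injective hfac
    rw [hBji] at this
    nlinarith [this]
end

section
/- Let μ0 and μ1 be probability measures on ℝ with μ0 atomless, both having finite second moments. Let F_0 be the cumulative distribution function of μ0 and Q_1 the generalized inverse of the cumulative distribution function of μ1, and set T⋆ = Q_1 ∘ F_0. Then for every measurable map T : ℝ → ℝ whose pushforward of μ0 equals μ1, ∫ (x − T⋆(x))² dμ0(x) ≤ ∫ (x − T(x))² dμ0(x). -/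
/-!
Writing `x = ∫ (𝟙{s < x} - 𝟙{s < 0}) ds` and applying Fubini gives Hoeffding's identity
`∫ X Y dμ = ∬ K(s, t) ds dt`, in which `K(s, t)` is `μ(X > s, Y > t)` plus terms that depend
only on the laws of `X` and `Y`. For a coupling `(x, T x)` of `μ₀` and `μ₁` the joint term is at
most `min (μ₀(x > s), μ₀(T x > t))`, and `T⋆` attains this bound because it is nondecreasing on
the `μ₀`-conull set `{0 < F₀ < 1}`. Hence `T⋆` maximises `∫ x T(x) dμ₀`, and so minimises
`∫ (x - T x)² dμ₀ = ∫ x² dμ₀ - 2 ∫ x T(x) dμ₀ + ∫ y² dμ₁`. That `T⋆` pushes `μ₀` to `μ₁` is the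
probability integral transform: `F₀` pushes the atomless `μ₀` to the uniform law on `[0, 1]`,
which `Q₁` pushes to `μ₁`.
-/

open MeasureTheory Set Filter ProbabilityTheory

noncomputable def signedStep (a s : ℝ) : ℝ := (Ioi s).indicator 1 a - (Ioi s).indicator 1 0

lemma signedStep_eq_indicator (a : ℝ) :
    signedStep a = (Ico 0 a).indicator 1 - (Ico a 0).indicator 1 := by
  ext s
  simp only [signedStep, Pi.sub_apply, indicator, mem_Ioi, mem_Ico, Pi.one_apply]
  split_ifs <;> grind

lemma abs_signedStep (a s : ℝ) :
    |signedStep a s| = (Ico 0 a).indicator 1 s + (Ico a 0).indicator 1 s := by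
  simp only [signedStep_eq_indicator, Pi.sub_apply, indicator, mem_Ico, Pi.one_apply]
  split_ifs <;> grind

lemma integrable_indicator_Ico_one (a b : ℝ) : Integrable ((Ico a b).indicator (1 : ℝ → ℝ)) :=
  (integrable_indicator_iff measurableSet_Ico).2 (integrableOn_const measure_Ico_lt_top.ne)

lemma integrable_signedStep (a : ℝ) : Integrable (signedStep a) := by
  rw [signedStep_eq_indicator]
  exact (integrable_indicator_Ico_one 0 a).sub (integrable_indicator_Ico_one a 0)

lemma integral_signedStep (a : ℝ) : ∫ s, signedStep a s = a := by
  rw [signedStep_eq_indicator]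
  simp only [Pi.sub_apply]
  rw [integral_sub (integrable_indicator_Ico_one 0 a)
    (integrable_indicator_Ico_one a 0), integral_indicator_one measurableSet_Ico,
    integral_indicator_one measurableSet_Ico, Real.volume_real_Ico, Real.volume_real_Ico]
  simp [max_zero_sub_max_neg_zero_eq_self]

lemma integral_abs_signedStep (a : ℝ) : ∫ s, |signedStep a s| = |a| := by
  simp_rw [abs_signedStep]
  rw [integral_add (integrable_indicator_Ico_one 0 a) (integrable_indicator_Ico_one a 0),
    integral_indicator_one measurableSet_Ico, integral_indicator_one measurableSet_Ico,
    Real.volume_real_Ico, Real.volume_real_Ico]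
  simp [max_zero_add_max_neg_zero_eq_abs_self]

lemma measurable_signedStep : Measurable (Function.uncurry signedStep) := by
  have h : ∀ f : ℝ × ℝ → ℝ, Measurable f →
      Measurable fun p : ℝ × ℝ => (Ioi p.2).indicator (1 : ℝ → ℝ) (f p) := fun f hf =>
    (measurable_const.indicator (measurableSet_lt measurable_snd hf) : Measurable
      ({p : ℝ × ℝ | p.2 < f p}.indicator 1))
  exact (h _ measurable_fst).sub (h _ measurable_const)

section Hoeffding

variable {Ω : Type*} [MeasurableSpace Ω] {μ : Measure Ω} {X Y Z : Ω → ℝ}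

noncomputable def hoeffdingKernel (μ : Measure Ω) (X Y : Ω → ℝ) (p : ℝ × ℝ) : ℝ :=
  ∫ ω, signedStep (X ω) p.1 * signedStep (Y ω) p.2 ∂μ

lemma integral_signedStep_mul_signedStep (a b : ℝ) :
    ∫ p : ℝ × ℝ, signedStep a p.1 * signedStep b p.2 = a * b := by
  rw [Measure.volume_eq_prod, integral_prod_mul, integral_signedStep, integral_signedStep]

lemma integrable_signedStep_mul_signedStep [SFinite μ] (hX : Measurable X) (hY : Measurable Y)
    (hXY : Integrable (fun ω => X ω * Y ω) μ) :
    Integrable (fun q : Ω × (ℝ × ℝ) => signedStep (X q.1) q.2.1 * signedStep (Y q.1) q.2.2)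
      (μ.prod volume) := by
  have hmeas : Measurable fun q : Ω × (ℝ × ℝ) =>
      signedStep (X q.1) q.2.1 * signedStep (Y q.1) q.2.2 :=
    (measurable_signedStep.comp ((hX.comp measurable_fst).prodMk measurable_snd.fst)).mul
      (measurable_signedStep.comp ((hY.comp measurable_fst).prodMk measurable_snd.snd))
  have hnorm : ∀ ω, ∫ p : ℝ × ℝ, ‖signedStep (X ω) p.1 * signedStep (Y ω) p.2‖ = ‖X ω * Y ω‖ := by
    intro ω
    simp only [Real.norm_eq_abs, abs_mul]
    rw [Measure.volume_eq_prod, integral_prod_mul (fun s => |signedStep (X ω) s|)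
      (fun t => |signedStep (Y ω) t|), integral_abs_signedStep,
      integral_abs_signedStep]
  refine (integrable_prod_iff hmeas.aestronglyMeasurable).2 ⟨ae_of_all _ fun ω => ?_, ?_⟩
  · exact (integrable_signedStep (X ω)).mul_prod (integrable_signedStep (Y ω))
  · simpa only [hnorm] using hXY.norm

lemma integrable_hoeffdingKernel [SFinite μ] (hX : Measurable X) (hY : Measurable Y)
    (hXY : Integrable (fun ω => X ω * Y ω) μ) : Integrable (hoeffdingKernel μ X Y) :=
  (integrable_signedStep_mul_signedStep hX hY hXY).integral_prod_right

lemma integral_mul_eq_integral_hoeffdingKernel [SFinite μ] (hX : Measurable X)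
    (hY : Measurable Y) (hXY : Integrable (fun ω => X ω * Y ω) μ) :
    ∫ ω, X ω * Y ω ∂μ = ∫ p, hoeffdingKernel μ X Y p := by
  have h := integrable_signedStep_mul_signedStep hX hY hXY
  calc ∫ ω, X ω * Y ω ∂μ
      = ∫ ω, ∫ p : ℝ × ℝ, signedStep (X ω) p.1 * signedStep (Y ω) p.2 ∂volume ∂μ := by
        simp only [integral_signedStep_mul_signedStep]
    _ = ∫ p, hoeffdingKernel μ X Y p := (integral_prod _ h).symm.trans (integral_prod_symm _ h)

lemma hoeffdingKernel_apply [IsFiniteMeasure μ] (hX : Measurable X) (hY : Measurable Y)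
    (s t : ℝ) :
    hoeffdingKernel μ X Y (s, t) = μ.real (X ⁻¹' Ioi s ∩ Y ⁻¹' Ioi t)
      - (Ioi t).indicator 1 0 * μ.real (X ⁻¹' Ioi s) - (Ioi s).indicator 1 0 * μ.real (Y ⁻¹' Ioi t)
      + (Ioi s).indicator 1 0 * (Ioi t).indicator 1 0 * μ.real univ := by
  set A := X ⁻¹' Ioi s
  set B := Y ⁻¹' Ioi t
  set a : ℝ := (Ioi s).indicator 1 0
  set b : ℝ := (Ioi t).indicator 1 0
  have hA : MeasurableSet A := hX measurableSet_Ioi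
  have hB : MeasurableSet B := hY measurableSet_Ioi
  have hind : ∀ {S : Set Ω}, MeasurableSet S → Integrable (S.indicator (1 : Ω → ℝ)) μ :=
    fun hS => (integrable_const 1).indicator hS
  have hexpand : ∀ ω, signedStep (X ω) s * signedStep (Y ω) t =
      (A ∩ B).indicator 1 ω - b * A.indicator 1 ω - a * B.indicator 1 ω + a * b := by
    intro ω
    rw [show signedStep (X ω) s = A.indicator 1 ω - a from rfl,
      show signedStep (Y ω) t = B.indicator 1 ω - b from rfl, inter_indicator_one, Pi.mul_apply]
    ring
  simp only [hoeffdingKernel, hexpand]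
  rw [integral_add, integral_sub, integral_sub, integral_const_mul, integral_const_mul,
    integral_indicator_one (hA.inter hB), integral_indicator_one hA, integral_indicator_one hB,
    integral_const, smul_eq_mul]
  · ring
  all_goals fun_prop (disch := measurability)

theorem integral_mul_le_of_measure_inter_le [IsFiniteMeasure μ] (hX : Measurable X)
    (hY : Measurable Y) (hZ : Measurable Z) (hXY : Integrable (fun ω => X ω * Y ω) μ)
    (hXZ : Integrable (fun ω => X ω * Z ω) μ) (hYZ : μ.map Y = μ.map Z)
    (hle : ∀ s t, μ (X ⁻¹' Ioi s ∩ Y ⁻¹' Ioi t) ≤ μ (X ⁻¹' Ioi s ∩ Z ⁻¹' Ioi t)) :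
    ∫ ω, X ω * Y ω ∂μ ≤ ∫ ω, X ω * Z ω ∂μ := by
  rw [integral_mul_eq_integral_hoeffdingKernel hX hY hXY,
    integral_mul_eq_integral_hoeffdingKernel hX hZ hXZ]
  refine integral_mono (integrable_hoeffdingKernel hX hY hXY)
    (integrable_hoeffdingKernel hX hZ hXZ) fun ⟨s, t⟩ => ?_
  have hlaw : μ.real (Y ⁻¹' Ioi t) = μ.real (Z ⁻¹' Ioi t) := by
    rw [← map_measureReal_apply hY measurableSet_Ioi, hYZ,
      map_measureReal_apply hZ measurableSet_Ioi]
  rw [hoeffdingKernel_apply hX hY, hoeffdingKernel_apply hX hZ, hlaw]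
  have : μ.real (X ⁻¹' Ioi s ∩ Y ⁻¹' Ioi t) ≤ μ.real (X ⁻¹' Ioi s ∩ Z ⁻¹' Ioi t) :=
    ENNReal.toReal_mono (measure_ne_top _ _) (hle s t)
  linarith

end Hoeffding

lemma measure_inter_eq_min_of_subset_or_subset {α : Type*} [MeasurableSpace α] {μ : Measure α}
    {A B D : Set α} (hD : ∀ᵐ x ∂μ, x ∈ D) (h : A ∩ D ⊆ B ∨ B ∩ D ⊆ A) :
    μ (A ∩ B) = min (μ A) (μ B) := by
  wlog hAB : A ∩ D ⊆ B generalizing A B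
  · rw [inter_comm, min_comm]
    exact this h.symm (h.resolve_left hAB)
  have hA : μ (A ∩ D) = μ A := measure_inter_conull hD
  have hAB' : μ (A ∩ B) = μ A :=
    le_antisymm (measure_mono inter_subset_left)
      (hA ▸ measure_mono (subset_inter inter_subset_left hAB))
  rw [hAB', min_eq_left (hA ▸ measure_mono hAB)]

lemma MonotoneOn.Ioi_inter_subset_or_subset {Y : ℝ → ℝ} {D : Set ℝ} (hY : MonotoneOn Y D)
    (s t : ℝ) : Ioi s ∩ D ⊆ Y ⁻¹' Ioi t ∨ Y ⁻¹' Ioi t ∩ D ⊆ Ioi s := by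
  by_contra! h
  obtain ⟨⟨a, ⟨has, haD⟩, hat⟩, ⟨b, ⟨hbt, hbD⟩, hbs⟩⟩ := h.imp not_subset.1 not_subset.1
  simp only [mem_Ioi, mem_preimage, not_lt] at has hat hbt hbs
  exact (hbt.trans_le (hY hbD haD (hbs.trans has.le))).not_ge hat

lemma MonotoneOn.measure_Ioi_inter_preimage_le {μ : Measure ℝ} {Y Z : ℝ → ℝ} {D : Set ℝ}
    (hY : MonotoneOn Y D) (hD : ∀ᵐ x ∂μ, x ∈ D) (hYm : Measurable Y) (hZm : Measurable Z)
    (hZY : μ.map Z = μ.map Y) (s t : ℝ) :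
    μ (Ioi s ∩ Z ⁻¹' Ioi t) ≤ μ (Ioi s ∩ Y ⁻¹' Ioi t) := by
  rw [measure_inter_eq_min_of_subset_or_subset hD (hY.Ioi_inter_subset_or_subset s t),
    ← Measure.map_apply hYm measurableSet_Ioi, ← hZY, Measure.map_apply hZm measurableSet_Ioi]
  exact le_min (measure_mono inter_subset_left) (measure_mono inter_subset_right)

lemma volume_restrict_Icc_zero_one_Iic {u : ℝ} (hu : u ≤ 1) :
    volume.restrict (Icc (0 : ℝ) 1) (Iic u) = ENNReal.ofReal u := by
  rw [Measure.restrict_apply measurableSet_Iic,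
    show Iic u ∩ Icc 0 1 = Icc 0 u by ext; simp only [mem_inter_iff, mem_Iic, mem_Icc]; grind,
    Real.volume_Icc, sub_zero]

lemma ae_restrict_Icc_zero_one_mem_Ioo : ∀ᵐ u ∂volume.restrict (Icc (0 : ℝ) 1), u ∈ Ioo 0 1 := by
  rw [← Measure.restrict_congr_set Ioo_ae_eq_Icc]
  exact ae_restrict_mem measurableSet_Ioo

section Cdf

variable (μ : Measure ℝ) [IsProbabilityMeasure μ] [NullSingletonClass μ]

lemma continuous_cdf : Continuous (cdf μ) := by
  refine continuous_iff_continuousAt.2 fun x => ?_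
  rw [(monotone_cdf μ).continuousAt_iff_leftLim_eq_rightLim, StieltjesFunction.rightLim_eq]
  have h : ENNReal.ofReal (cdf μ x - Function.leftLim (cdf μ) x) = 0 := by
    rw [← (cdf μ).measure_singleton x, measure_cdf]
    exact measure_singleton x
  rw [ENNReal.ofReal_eq_zero] at h
  exact le_antisymm ((monotone_cdf μ).leftLim_le le_rfl) (by linarith)

lemma measure_cdf_le {u : ℝ} (h0 : 0 ≤ u) (h1 : u < 1) :
    μ {x | cdf μ x ≤ u} = ENNReal.ofReal u := by
  set S := {x | cdf μ x ≤ u}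
  rcases S.eq_empty_or_nonempty with hS | hS
  · obtain rfl : u = 0 := by
      refine le_antisymm (not_lt.1 fun hu => ?_) h0
      obtain ⟨x, hx⟩ := ((tendsto_cdf_atBot μ).eventually (eventually_lt_nhds hu)).exists
      exact hS.subset hx.le
    simp [hS]
  obtain ⟨b, hb⟩ := eventually_atTop.1 ((tendsto_cdf_atTop μ).eventually (eventually_gt_nhds h1))
  have hbdd : BddAbove S := ⟨b, fun x hx => not_lt.1 fun hbx => (hb x hbx.le).not_ge hx⟩
  have hclosed : IsClosed S := isClosed_le (continuous_cdf μ) continuous_const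
  set c := sSup S
  have hc : cdf μ c ≤ u := hclosed.csSup_mem hS hbdd
  have hSc : S = Iic c :=
    Subset.antisymm (fun x hx => le_csSup hbdd hx) fun x hx => (monotone_cdf μ hx).trans hc
  have hcu : u ≤ cdf μ c := by
    have hIoi : Ioi c ⊆ {x | u ≤ cdf μ x} := fun x hx => show u ≤ cdf μ x from
      not_lt.1 fun hxu => (not_le.2 hx) (le_csSup hbdd (show x ∈ S from hxu.le))
    have := (isClosed_le continuous_const (continuous_cdf μ)).closure_subset_iff.2 hIoi
    exact this (closure_Ioi c ▸ self_mem_Ici)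
  rw [hSc, ← ofReal_cdf, le_antisymm hc hcu]

lemma map_cdf : μ.map (cdf μ) = volume.restrict (Icc 0 1) := by
  refine Measure.ext_of_Iic _ _ fun u => ?_
  rw [Measure.map_apply (continuous_cdf μ).measurable measurableSet_Iic]
  rcases lt_or_ge u 0 with hu0 | hu0
  · rw [show cdf μ ⁻¹' Iic u = ∅ from eq_empty_of_forall_notMem fun x hx =>
        (hu0.trans_le (cdf_nonneg μ x)).not_ge hx,
      volume_restrict_Icc_zero_one_Iic (hu0.le.trans zero_le_one),
      ENNReal.ofReal_of_nonpos hu0.le, measure_empty]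
  rcases lt_or_ge u 1 with hu1 | hu1
  · exact (measure_cdf_le μ hu0 hu1).trans (volume_restrict_Icc_zero_one_Iic hu1.le).symm
  · rw [show cdf μ ⁻¹' Iic u = univ from eq_univ_of_forall fun x => (cdf_le_one μ x).trans hu1,
      Measure.restrict_apply measurableSet_Iic,
      show Iic u ∩ Icc 0 1 = Icc 0 1 from inter_eq_right.2 fun x hx => hx.2.trans hu1]
    simp

lemma ae_cdf_mem_Ioo : ∀ᵐ x ∂μ, cdf μ x ∈ Ioo 0 1 :=
  ae_of_ae_map (continuous_cdf μ).aemeasurable (map_cdf μ ▸ ae_restrict_Icc_zero_one_mem_Ioo)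

end Cdf

noncomputable def quantile (ν : Measure ℝ) (u : ℝ) : ℝ := sInf {x | u ≤ cdf ν x}

section Quantile

variable (ν : Measure ℝ)

lemma quantile_le_iff {u : ℝ} (h0 : 0 < u) (h1 : u < 1) (x : ℝ) :
    quantile ν u ≤ x ↔ u ≤ cdf ν x := by
  have hne : {x | u ≤ cdf ν x}.Nonempty :=
    (((tendsto_cdf_atTop ν).eventually (eventually_gt_nhds h1)).exists).imp fun _ => le_of_lt
  have hbdd : BddBelow {x | u ≤ cdf ν x} := by
    obtain ⟨b, hb⟩ := eventually_atBot.1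
      ((tendsto_cdf_atBot ν).eventually (eventually_lt_nhds h0))
    exact ⟨b, fun x hx => not_lt.1 fun hxb => (hb x hxb.le).not_ge hx⟩
  refine ⟨fun h => le_trans ?_ (monotone_cdf ν h), fun h => csInf_le hbdd h⟩
  refine ge_of_tendsto (((cdf ν).right_continuous _).mono Ioi_subset_Ici_self)
    (eventually_nhdsWithin_of_forall fun y hy => ?_)
  obtain ⟨z, hz, hzy⟩ := exists_lt_of_csInf_lt hne hy
  exact hz.trans (monotone_cdf ν hzy.le)

lemma monotoneOn_quantile : MonotoneOn (quantile ν) (Ioo 0 1) := fun _ hu _ hv huv =>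
  (quantile_le_iff ν hu.1 hu.2 _).2 <|
    huv.trans ((quantile_le_iff ν hv.1 hv.2 _).1 le_rfl)

lemma quantile_of_nonpos {u : ℝ} (hu : u ≤ 0) : quantile ν u = 0 := by
  rw [quantile, show {x | u ≤ cdf ν x} = univ from
    eq_univ_of_forall fun x => hu.trans (cdf_nonneg ν x)]
  exact Real.sInf_of_not_bddBelow not_bddBelow_univ

lemma quantile_of_one_lt {u : ℝ} (hu : 1 < u) : quantile ν u = 0 := by
  rw [quantile, show {x | u ≤ cdf ν x} = ∅ from
    eq_empty_of_forall_notMem fun x hx => (hu.trans_le hx).not_ge (cdf_le_one ν x)]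
  exact Real.sInf_empty

-- `quantile ν` is monotone only on `(0, 1)`; off it the infimum takes junk values.
lemma measurable_quantile : Measurable (quantile ν) := by
  refine measurable_of_restrict_of_restrict_compl (s := Ioo 0 1) measurableSet_Ioo ?_ ?_
  · exact Monotone.measurable fun u v huv => monotoneOn_quantile ν u.2 v.2 huv
  · have h : (Ioo 0 1)ᶜ.domRestrict (quantile ν) =
        ({1} : Set ℝ).indicator (fun _ => quantile ν 1) ∘ (↑) := by
      ext ⟨u, hu⟩
      simp only [domRestrict_apply, Function.comp_apply]
      rcases eq_or_ne u 1 with rfl | hu1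
      · simp
      rw [indicator_of_notMem (mem_singleton_iff.not.2 hu1)]
      simp only [mem_compl_iff, mem_Ioo, not_and_or, not_lt] at hu
      rcases hu with hu | hu
      · exact quantile_of_nonpos ν hu
      · exact quantile_of_one_lt ν (lt_of_le_of_ne hu hu1.symm)
    rw [h]
    exact (measurable_const.indicator (measurableSet_singleton 1)).comp measurable_subtype_coe

lemma map_quantile [IsProbabilityMeasure ν] : (volume.restrict (Icc 0 1)).map (quantile ν) = ν := by
  refine Measure.ext_of_Iic _ _ fun y => ?_
  rw [Measure.map_apply (measurable_quantile ν) measurableSet_Iic]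
  have hae : quantile ν ⁻¹' Iic y =ᵐ[volume.restrict (Icc 0 1)] Iic (cdf ν y) :=
    eventuallyEq_set.2 <| ae_restrict_Icc_zero_one_mem_Ioo.mono fun u hu =>
      quantile_le_iff ν hu.1 hu.2 y
  rw [measure_congr hae, volume_restrict_Icc_zero_one_Iic (cdf_le_one ν y),
    ofReal_cdf]

end Quantile

lemma map_quantile_comp_cdf (μ ν : Measure ℝ) [IsProbabilityMeasure μ] [NullSingletonClass μ]
    [IsProbabilityMeasure ν] : μ.map (quantile ν ∘ cdf μ) = ν := by
  rw [← Measure.map_map (measurable_quantile ν) (continuous_cdf μ).measurable, map_cdf,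
    map_quantile]

lemma monotoneOn_quantile_comp_cdf (μ ν : Measure ℝ) :
    MonotoneOn (quantile ν ∘ cdf μ) {x | cdf μ x ∈ Ioo 0 1} :=
  (monotoneOn_quantile ν).comp ((monotone_cdf μ).monotoneOn _) fun _ hx => hx

lemma integral_sub_sq {α : Type*} [MeasurableSpace α] {μ : Measure α} {f g : α → ℝ}
    (hf : MemLp f 2 μ) (hg : MemLp g 2 μ) :
    ∫ a, (f a - g a) ^ 2 ∂μ = ∫ a, f a ^ 2 ∂μ - 2 * ∫ a, f a * g a ∂μ + ∫ a, g a ^ 2 ∂μ := by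
  have hf2 := hf.integrable_sq
  have hg2 := hg.integrable_sq
  have hfg : Integrable (fun a => 2 * (f a * g a)) μ := (hf.integrable_mul hg).const_mul 2
  simp_rw [sub_sq, mul_assoc]
  have hsub : Integrable (fun a => f a ^ 2 - 2 * (f a * g a)) μ := hf2.sub hfg
  rw [integral_add hsub hg2, integral_sub hf2 hfg, integral_const_mul]

lemma memLp_two_of_map_eq {α : Type*} [MeasurableSpace α] {μ : Measure α} {ν : Measure ℝ}
    {R : α → ℝ} (hR : Measurable R) (hRν : μ.map R = ν) (hν : Integrable (fun y => y ^ 2) ν) :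
    MemLp R 2 μ := by
  subst hRν
  have : MemLp id 2 (μ.map R) :=
    (memLp_two_iff_integrable_sq aestronglyMeasurable_id).2 hν
  exact (memLp_map_measure_iff aestronglyMeasurable_id hR.aemeasurable).1 this

/-- Univariate Monge optimality of the monotone rearrangement for quadratic cost:
if `μ0` is atomless, both `μ0` and `μ1` have finite second moments, and `T` is any
measurable map pushing `μ0` to `μ1`, then the monotone map `T⋆ = Q1 ∘ F0` has transport
cost no larger than that of `T`. -/
theorem stmt_5 (μ0 μ1 : Measure ℝ) [IsProbabilityMeasure μ0] [IsProbabilityMeasure μ1]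
    [NullSingletonClass μ0]
    (hμ0 : Integrable (fun x => x ^ 2) μ0) (hμ1 : Integrable (fun x => x ^ 2) μ1)
    (F0 F1 : ℝ → ℝ)
    (hF0 : ∀ x, F0 x = (μ0 (Iic x)).toReal)
    (hF1 : ∀ x, F1 x = (μ1 (Iic x)).toReal)
    (Q1 : ℝ → ℝ) (hQ1 : ∀ u, Q1 u = sInf {x : ℝ | u ≤ F1 x})
    (Tstar : ℝ → ℝ) (hTstar : ∀ x, Tstar x = Q1 (F0 x)) :
    ∀ T : ℝ → ℝ, Measurable T → Measure.map T μ0 = μ1 →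
      ∫ x, (x - Tstar x) ^ 2 ∂μ0 ≤ ∫ x, (x - T x) ^ 2 ∂μ0 := by
  intro T hT hTμ
  obtain rfl : F0 = cdf μ0 := funext fun x => by rw [hF0, cdf_eq_real, measureReal_def]
  obtain rfl : F1 = cdf μ1 := funext fun x => by rw [hF1, cdf_eq_real, measureReal_def]
  obtain rfl : Tstar = quantile μ1 ∘ cdf μ0 := funext fun x => by rw [hTstar, hQ1]; rfl
  have hTs : Measurable (quantile μ1 ∘ cdf μ0) :=
    (measurable_quantile μ1).comp (continuous_cdf μ0).measurable
  have hTsμ := map_quantile_comp_cdf μ0 μ1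
  have hx : MemLp (fun x => x) 2 μ0 := (memLp_two_iff_integrable_sq aestronglyMeasurable_id).2 hμ0
  have hT2 := memLp_two_of_map_eq hT hTμ hμ1
  have hTs2 := memLp_two_of_map_eq hTs hTsμ hμ1
  have hcorr : ∫ x, x * T x ∂μ0 ≤ ∫ x, x * (quantile μ1 ∘ cdf μ0) x ∂μ0 :=
    integral_mul_le_of_measure_inter_le measurable_id hT hTs (hx.integrable_mul hT2)
      (hx.integrable_mul hTs2) (hTμ.trans hTsμ.symm)
      ((monotoneOn_quantile_comp_cdf μ0 μ1).measure_Ioi_inter_preimage_le (ae_cdf_mem_Ioo μ0)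
        hTs hT (hTμ.trans hTsμ.symm))
  have hsq : ∀ {R : ℝ → ℝ}, Measurable R → μ0.map R = μ1 → ∫ x, R x ^ 2 ∂μ0 = ∫ y, y ^ 2 ∂μ1 :=
    fun hR hRμ => by rw [← hRμ, integral_map hR.aemeasurable (by fun_prop)]
  rw [integral_sub_sq hx hTs2, integral_sub_sq hx hT2, hsq hT hTμ, hsq hTs hTsμ]
  linarith
end

section
/- Let μ0 and μ1 be probability measures on ℝ with μ0 atomless. Let F_0 be the cumulative distribution function of μ0 and Q_1 the generalized inverse of the cumulative distribution function of μ1. If T : ℝ → ℝ is a nondecreasing measurable map whose pushforward of μ0 equals μ1, then T(x) = Q_1(F_0(x)) for μ0-almost every x. -/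
/-!
The inequality `Q₁ (F₀ x) ≤ T x` holds at every `x` with `F₀ x > 0`, because monotonicity gives
`F₀ x = μ₀ (Iic x) ≤ μ₀ (T ⁻¹' Iic (T x)) = F₁ (T x)`, and `F₀ > 0` holds `μ₀`-a.e.
For the reverse inequality fix a rational `q`. The points with `F₀ x ≤ F₁ q` and `q < T x` form
the intersection of a lower set of measure at most `F₁ q` with an upper set of measure `1 - F₁ q`;
two such sets cover the line as soon as they meet, so their intersection is null. Hence a.e.
`T x ≤ z` whenever `F₀ x ≤ F₁ z`, i.e. `T x ≤ Q₁ (F₀ x)`.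
-/

open MeasureTheory Set ProbabilityTheory

open scoped ENNReal

lemma IsLowerSet.measure_le_of_forall_measure_Iic_le {μ : Measure ℝ} {B : Set ℝ}
    (hB : IsLowerSet B) {c : ℝ≥0∞} (h : ∀ x ∈ B, μ (Iic x) ≤ c) : μ B ≤ c := by
  by_cases hmax : ∃ m ∈ B, ∀ x ∈ B, x ≤ m
  · obtain ⟨m, hm, hle⟩ := hmax
    exact (measure_mono hle).trans (h m hm)
  push Not at hmax
  have hB_eq : B = ⋃ q ∈ {q : ℚ | (q : ℝ) ∈ B}, Iic (q : ℝ) := by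
    ext x
    simp only [mem_iUnion, mem_ofPred_eq, mem_Iic, exists_prop]
    constructor
    · intro hx
      obtain ⟨y, hy, hxy⟩ := hmax x hx
      obtain ⟨q, hxq, hqy⟩ := exists_rat_btwn hxy
      exact ⟨q, hB hqy.le hy, hxq.le⟩
    · rintro ⟨q, hq, hxq⟩
      exact hB hxq hq
  rw [hB_eq, measure_biUnion_eq_iSup (to_countable _)]
  · exact iSup₂_le fun q hq => h q hq
  · exact fun a ha b hb => ⟨max a b, by rcases max_choice a b with h | h <;> rw [h] <;> assumption,
      Iic_subset_Iic.2 (mod_cast le_max_left a b), Iic_subset_Iic.2 (mod_cast le_max_right a b)⟩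

lemma IsLowerSet.measure_inter_eq_zero_of_add_le_one {α : Type*} [LinearOrder α]
    [MeasurableSpace α] {μ : Measure α} [IsProbabilityMeasure μ] {B C : Set α}
    (hB : IsLowerSet B) (hC : IsUpperSet C) (hCm : MeasurableSet C) (h : μ B + μ C ≤ 1) :
    μ (B ∩ C) = 0 := by
  obtain hempty | ⟨z, hzB, hzC⟩ := (B ∩ C).eq_empty_or_nonempty
  · simp [hempty]
  have hcover : B ∪ C = univ := eq_univ_of_forall fun x =>
    (le_total x z).imp (fun hxz => hB hxz hzB) (fun hzx => hC hzx hzC)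
  have hsum := measure_union_add_inter (μ := μ) B hCm
  rw [hcover, measure_univ] at hsum
  exact nonpos_iff_eq_zero.1 <| ENNReal.le_of_add_le_add_left ENNReal.one_ne_top <| by
    rw [hsum, add_zero]; exact h

lemma measure_cdf_le_le (μ : Measure ℝ) [IsProbabilityMeasure μ] (c : ℝ) :
    μ {x | cdf μ x ≤ c} ≤ ENNReal.ofReal c :=
  IsLowerSet.measure_le_of_forall_measure_Iic_le (fun _ _ hba ha => (monotone_cdf μ hba).trans ha)
    fun x hx => ofReal_cdf μ x ▸ ENNReal.ofReal_le_ofReal hx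

lemma ae_cdf_pos (μ : Measure ℝ) [IsProbabilityMeasure μ] : ∀ᵐ x ∂μ, 0 < cdf μ x := by
  simp only [ae_iff, not_lt]
  simpa using measure_cdf_le_le μ 0

lemma bddBelow_setOf_le_cdf (μ : Measure ℝ) {u : ℝ} (hu : 0 < u) :
    BddBelow {x | u ≤ cdf μ x} := by
  obtain ⟨z, hz⟩ := ((tendsto_cdf_atBot μ).eventually (gt_mem_nhds hu)).exists
  exact ⟨z, fun w hw => le_of_not_gt fun hwz => (hw.trans (monotone_cdf μ hwz.le)).not_gt hz⟩

section MonotonePushforward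

variable {μ ν : Measure ℝ} [IsProbabilityMeasure μ] [IsProbabilityMeasure ν] {T : ℝ → ℝ}

lemma cdf_le_cdf_of_map_eq (hT : Monotone T) (hTm : Measurable T) (hmap : μ.map T = ν)
    (x : ℝ) : cdf μ x ≤ cdf ν (T x) := by
  rw [cdf_eq_real, cdf_eq_real, ← hmap, map_measureReal_apply hTm measurableSet_Iic]
  exact measureReal_mono fun y hy => hT hy

lemma ae_le_of_cdf_le_cdf_of_map_eq (hT : Monotone T) (hTm : Measurable T)
    (hmap : μ.map T = ν) : ∀ᵐ x ∂μ, ∀ z, cdf μ x ≤ cdf ν z → T x ≤ z := by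
  have h_rat : ∀ q : ℚ, ∀ᵐ x ∂μ, cdf μ x ≤ cdf ν q → T x ≤ q := by
    intro q
    have hupper : μ {x | (q : ℝ) < T x} = 1 - ENNReal.ofReal (cdf ν q) := by
      rw [ofReal_cdf, ← prob_compl_eq_one_sub measurableSet_Iic, compl_Iic, ← hmap,
        Measure.map_apply hTm measurableSet_Ioi]
      rfl
    simp only [ae_iff, Classical.not_imp, not_le]
    refine IsLowerSet.measure_inter_eq_zero_of_add_le_one
      (fun _ _ hba ha => (monotone_cdf μ hba).trans ha)
      (fun _ _ hab (ha : (q : ℝ) < _) => ha.trans_le (hT hab))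
      (measurableSet_lt measurable_const hTm) ?_
    calc μ {x | cdf μ x ≤ cdf ν q} + μ {x | (q : ℝ) < T x}
        ≤ ENNReal.ofReal (cdf ν q) + (1 - ENNReal.ofReal (cdf ν q)) :=
          add_le_add (measure_cdf_le_le μ _) hupper.le
      _ = 1 := add_tsub_cancel_of_le (ofReal_cdf ν q ▸ prob_le_one)
  filter_upwards [ae_all_iff.2 h_rat] with x hx z hz
  by_contra! hzT
  obtain ⟨q, hzq, hqT⟩ := exists_rat_btwn hzT
  exact (hx q (hz.trans (monotone_cdf ν hzq.le))).not_gt hqT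

end MonotonePushforward

theorem stmt_6_general (μ0 μ1 : Measure ℝ) [IsProbabilityMeasure μ0] [IsProbabilityMeasure μ1]
    (F0 F1 : ℝ → ℝ)
    (hF0 : ∀ x, F0 x = (μ0 (Iic x)).toReal)
    (hF1 : ∀ x, F1 x = (μ1 (Iic x)).toReal)
    (Q1 : ℝ → ℝ) (hQ1 : ∀ u, Q1 u = sInf {x : ℝ | u ≤ F1 x})
    (T : ℝ → ℝ) (hTmono : Monotone T) (hTmeas : Measurable T)
    (hTpush : Measure.map T μ0 = μ1) :
    ∀ᵐ x ∂μ0, T x = Q1 (F0 x) := by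
  obtain rfl : F0 = cdf μ0 := funext fun x => by rw [hF0, cdf_eq_real, measureReal_def]
  obtain rfl : F1 = cdf μ1 := funext fun x => by rw [hF1, cdf_eq_real, measureReal_def]
  filter_upwards [ae_cdf_pos μ0, ae_le_of_cdf_le_cdf_of_map_eq hTmono hTmeas hTpush]
    with x hpos hle
  have hTx := cdf_le_cdf_of_map_eq hTmono hTmeas hTpush x
  rw [hQ1]
  exact le_antisymm (le_csInf ⟨T x, hTx⟩ hle) (csInf_le (bddBelow_setOf_le_cdf μ1 hpos) hTx)

/-- Uniqueness of the monotone transport map: if `μ0` is atomless and `T` is a nondecreasing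
measurable map pushing `μ0` to `μ1`, then `T` coincides `μ0`-a.e. with the monotone
rearrangement `Q1 ∘ F0`. -/
theorem stmt_6 (μ0 μ1 : Measure ℝ) [IsProbabilityMeasure μ0] [IsProbabilityMeasure μ1]
    [NullSingletonClass μ0]
    (F0 F1 : ℝ → ℝ)
    (hF0 : ∀ x, F0 x = (μ0 (Iic x)).toReal)
    (hF1 : ∀ x, F1 x = (μ1 (Iic x)).toReal)
    (Q1 : ℝ → ℝ) (hQ1 : ∀ u, Q1 u = sInf {x : ℝ | u ≤ F1 x})
    (T : ℝ → ℝ) (hTmono : Monotone T) (hTmeas : Measurable T)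
    (hTpush : Measure.map T μ0 = μ1) :
    ∀ᵐ x ∂μ0, T x = Q1 (F0 x) :=
  stmt_6_general μ0 μ1 F0 F1 hF0 hF1 Q1 hQ1 T hTmono hTmeas hTpush
end

section
/- For s ∈ {0,1}, let μ_sx, μ_sy ∈ ℝ, σ_sx, σ_sy > 0, r_s ∈ (−1,1), and let N_s denote the bivariate Gaussian measure on ℝ² with mean (μ_sx, μ_sy) and covariance matrix [[σ_sx², r_s σ_sx σ_sy],[r_s σ_sx σ_sy, σ_sy²]]. Define T_x(x) = μ_1x + (σ_1x/σ_0x)(x − μ_0x) and T_{y|x}(x, y) = μ_1y + (r_1 σ_1y/σ_1x)(T_x(x) − μ_1x) + (σ_1y √(1 − r_1²))/(σ_0y √(1 − r_0²)) · ( y − μ_0y − (r_0 σ_0y/σ_0x)(x − μ_0x) ). Then the pushforward of N_0 under the lower triangular map (x, y) ↦ (T_x(x), T_{y|x}(x, y)) equals N_1. -/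
open Matrix MeasureTheory

/-- The multivariate Gaussian measure `N(m, S)` on `ℝ^d`, defined via its density
`(2π)^{-d/2} det(S)^{-1/2} exp(-(1/2)(x-m)ᵀ S⁻¹ (x-m))` with respect to Lebesgue measure. -/
noncomputable def mvGaussian {d : ℕ} (m : Fin d → ℝ) (S : Matrix (Fin d) (Fin d) ℝ) :
    Measure (Fin d → ℝ) :=
  volume.withDensity fun x =>
    ENNReal.ofReal (Real.sqrt ((2 * Real.pi) ^ d * S.det)⁻¹ *
      Real.exp (-(1 / 2) * ((x - m) ⬝ᵥ S⁻¹.mulVec (x - m))))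

/-!
An affine map `x ↦ A x + b` with `det A ≠ 0` pushes `N(m, S)` forward to `N(A m + b, A S Aᵀ)`:
Lebesgue measure is rescaled by `|det A|⁻¹`, which is exactly the change of the normalizing
constant `det(A S Aᵀ)^{-1/2} = |det A|⁻¹ det(S)^{-1/2}`, while the quadratic form is invariant.
The lower triangular map is affine, sends `(μ0x, μ0y)` to `(μ1x, μ1y)`, and its linear part is
`L₁ L₀⁻¹`, where `Lₛ = [[σsx, 0], [rₛ σsy, σsy √(1 - rₛ²)]]` is the Cholesky factor of `Σₛ`;
hence it carries `Σ₀ = L₀ L₀ᵀ` to `L₁ L₁ᵀ = Σ₁`.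
-/

open scoped ENNReal

lemma MeasurableEmbedding.map_withDensity_comp {α β : Type*} [MeasurableSpace α]
    [MeasurableSpace β] {f : α → β} (hf : MeasurableEmbedding f) (μ : Measure α)
    (g : β → ℝ≥0∞) :
    (μ.withDensity (g ∘ f)).map f = (μ.map f).withDensity g := by
  ext s hs
  rw [hf.map_apply, withDensity_apply _ (hf.measurable hs), withDensity_apply _ hs,
    Measure.restrict_map hf.measurable hs, hf.lintegral_map]
  rfl

noncomputable def mvGaussianPDF {d : ℕ} (m : Fin d → ℝ) (S : Matrix (Fin d) (Fin d) ℝ)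
    (x : Fin d → ℝ) : ℝ :=
  Real.sqrt ((2 * Real.pi) ^ d * S.det)⁻¹ * Real.exp (-(1 / 2) * ((x - m) ⬝ᵥ S⁻¹ *ᵥ (x - m)))

section Affine

variable {d : ℕ} {A : Matrix (Fin d) (Fin d) ℝ}

lemma mvGaussian_eq_withDensity (m : Fin d → ℝ) (S : Matrix (Fin d) (Fin d) ℝ) :
    mvGaussian m S = volume.withDensity fun x => ENNReal.ofReal (mvGaussianPDF m S x) := rfl

lemma mulVec_dotProduct_inv_mul_mulVec (hA : A.det ≠ 0) (M : Matrix (Fin d) (Fin d) ℝ)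
    (v : Fin d → ℝ) : A *ᵥ v ⬝ᵥ (A * M * Aᵀ)⁻¹ *ᵥ (A *ᵥ v) = v ⬝ᵥ M⁻¹ *ᵥ v := by
  rw [Matrix.mul_inv_rev, Matrix.mul_inv_rev, dotProduct_mulVec, vecMul_mulVec,
    ← mul_assoc, mul_nonsing_inv _ (by rwa [det_transpose, isUnit_iff_ne_zero]), one_mul,
    ← dotProduct_mulVec, mulVec_mulVec, mul_assoc, nonsing_inv_mul _ hA.isUnit, mul_one]

lemma mvGaussianPDF_mulVec_add (hA : A.det ≠ 0) (m b x : Fin d → ℝ)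
    (S : Matrix (Fin d) (Fin d) ℝ) :
    mvGaussianPDF (A *ᵥ m + b) (A * S * Aᵀ) (A *ᵥ x + b) = |A.det⁻¹| * mvGaussianPDF m S x := by
  have hsqrt : Real.sqrt ((2 * Real.pi) ^ d * (A * S * Aᵀ).det)⁻¹ =
      |A.det⁻¹| * Real.sqrt ((2 * Real.pi) ^ d * S.det)⁻¹ := by
    rw [det_mul, det_mul, det_transpose, ← Real.sqrt_sq_eq_abs, ← Real.sqrt_mul (sq_nonneg _)]
    congr 1
    rw [inv_pow]
    ring
  rw [mvGaussianPDF, mvGaussianPDF, hsqrt, add_sub_add_right_eq_sub, ← mulVec_sub,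
    mulVec_dotProduct_inv_mul_mulVec hA, mul_assoc]

lemma measurableEmbedding_mulVec_add (hA : A.det ≠ 0) (b : Fin d → ℝ) :
    MeasurableEmbedding fun x => A *ᵥ x + b := by
  have := A.invertibleOfIsUnitDet hA.isUnit
  exact ((A.toLinearEquiv' this).toContinuousLinearEquiv.toHomeomorph.trans
    (Homeomorph.addRight b)).measurableEmbedding

lemma map_mulVec_add_volume (hA : A.det ≠ 0) (b : Fin d → ℝ) :
    (volume : Measure (Fin d → ℝ)).map (fun x => A *ᵥ x + b) =
      ENNReal.ofReal |A.det⁻¹| • volume := by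
  rw [show (fun x => A *ᵥ x + b) = (· + b) ∘ toLin' A from rfl,
    ← Measure.map_map (measurable_add_const b) (toLin' A).continuous_on_pi.measurable,
    Real.map_matrix_volume_pi_eq_smul_volume_pi hA, Measure.map_smul, map_add_right_eq_self]

theorem map_mvGaussian_mulVec_add (hA : A.det ≠ 0) (m b : Fin d → ℝ)
    (S : Matrix (Fin d) (Fin d) ℝ) :
    (mvGaussian m S).map (fun x => A *ᵥ x + b) = mvGaussian (A *ᵥ m + b) (A * S * Aᵀ) := by
  set c := ENNReal.ofReal |A.det⁻¹|
  have hc : c ≠ 0 := by simp [c, hA]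
  have hdens : (fun x => ENNReal.ofReal (mvGaussianPDF m S x)) =
      (c⁻¹ • fun y => ENNReal.ofReal (mvGaussianPDF (A *ᵥ m + b) (A * S * Aᵀ) y)) ∘
        fun x => A *ᵥ x + b := by
    funext x
    simp only [Function.comp_apply, Pi.smul_apply, smul_eq_mul, mvGaussianPDF_mulVec_add hA,
      c, ENNReal.ofReal_mul (abs_nonneg _)]
    rw [← mul_assoc, ENNReal.inv_mul_cancel hc ENNReal.ofReal_ne_top, one_mul]
  rw [mvGaussian_eq_withDensity, mvGaussian_eq_withDensity, hdens,
    (measurableEmbedding_mulVec_add hA b).map_withDensity_comp, map_mulVec_add_volume hA,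
    withDensity_smul_measure, withDensity_smul' _ _ (ENNReal.inv_ne_top.2 hc), smul_smul,
    ENNReal.mul_inv_cancel hc ENNReal.ofReal_ne_top, one_smul]

end Affine

def bivariateCov (σx σy r : ℝ) : Matrix (Fin 2) (Fin 2) ℝ :=
  !![σx ^ 2, r * σx * σy; r * σx * σy, σy ^ 2]

noncomputable def knotheRosenblattMatrix (σ0x σ0y r0 σ1x σ1y r1 : ℝ) :
    Matrix (Fin 2) (Fin 2) ℝ :=
  let k := σ1y * √(1 - r1 ^ 2) / (σ0y * √(1 - r0 ^ 2))
  !![σ1x / σ0x, 0; (r1 * σ1y - k * r0 * σ0y) / σ0x, k]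

section Bivariate

variable {σ0x σ0y r0 σ1x σ1y r1 : ℝ}

lemma det_knotheRosenblattMatrix_ne_zero (hσ0x : σ0x ≠ 0) (hσ0y : σ0y ≠ 0) (hr0 : r0 ^ 2 < 1)
    (hσ1x : σ1x ≠ 0) (hσ1y : σ1y ≠ 0) (hr1 : r1 ^ 2 < 1) :
    (knotheRosenblattMatrix σ0x σ0y r0 σ1x σ1y r1).det ≠ 0 := by
  have h0 : √(1 - r0 ^ 2) ≠ 0 := (Real.sqrt_pos.2 (by linarith)).ne'
  have h1 : √(1 - r1 ^ 2) ≠ 0 := (Real.sqrt_pos.2 (by linarith)).ne'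
  simp [knotheRosenblattMatrix, det_fin_two_of, *]

lemma knotheRosenblattMatrix_mul_bivariateCov_mul_transpose (hσ0x : σ0x ≠ 0) (hσ0y : σ0y ≠ 0)
    (hr0 : r0 ^ 2 < 1) (hr1 : r1 ^ 2 ≤ 1) :
    knotheRosenblattMatrix σ0x σ0y r0 σ1x σ1y r1 * bivariateCov σ0x σ0y r0 *
        (knotheRosenblattMatrix σ0x σ0y r0 σ1x σ1y r1)ᵀ = bivariateCov σ1x σ1y r1 := by
  have h0 : √(1 - r0 ^ 2) ^ 2 = 1 - r0 ^ 2 := Real.sq_sqrt (by linarith)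
  have h1 : √(1 - r1 ^ 2) ^ 2 = 1 - r1 ^ 2 := Real.sq_sqrt (by linarith)
  have h0' : √(1 - r0 ^ 2) ≠ 0 := (Real.sqrt_pos.2 (by linarith)).ne'
  ext i j
  fin_cases i <;> fin_cases j <;>
    simp [knotheRosenblattMatrix, bivariateCov, mul_apply, Fin.sum_univ_two] <;>
    field_simp
  · ring
  · ring
  · linear_combination σ1y ^ 2 * (1 - r0 ^ 2) * h1 - σ1y ^ 2 * (1 - r1 ^ 2) * h0

end Bivariate

/-- The affine lower triangular (Knothe–Rosenblatt) map, whose first component is the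
univariate Gaussian optimal map between first marginals and whose second component is the
conditional Gaussian transport, pushes the bivariate Gaussian `N₀` forward to `N₁`. -/
theorem stmt_16 (μ0x μ0y μ1x μ1y σ0x σ0y σ1x σ1y r0 r1 : ℝ)
    (hσ0x : 0 < σ0x) (hσ0y : 0 < σ0y) (hσ1x : 0 < σ1x) (hσ1y : 0 < σ1y)
    (hr0 : r0 ∈ Set.Ioo (-1 : ℝ) 1) (hr1 : r1 ∈ Set.Ioo (-1 : ℝ) 1)
    (N0 N1 : Measure (Fin 2 → ℝ))
    (hN0 : N0 = mvGaussian ![μ0x, μ0y]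
      !![σ0x ^ 2, r0 * σ0x * σ0y; r0 * σ0x * σ0y, σ0y ^ 2])
    (hN1 : N1 = mvGaussian ![μ1x, μ1y]
      !![σ1x ^ 2, r1 * σ1x * σ1y; r1 * σ1x * σ1y, σ1y ^ 2])
    (Tx : ℝ → ℝ) (hTx : ∀ x, Tx x = μ1x + σ1x / σ0x * (x - μ0x))
    (Tyx : ℝ → ℝ → ℝ)
    (hTyx : ∀ x y, Tyx x y =
      μ1y + r1 * σ1y / σ1x * (Tx x - μ1x) +
        σ1y * Real.sqrt (1 - r1 ^ 2) / (σ0y * Real.sqrt (1 - r0 ^ 2)) *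
          (y - μ0y - r0 * σ0y / σ0x * (x - μ0x))) :
    Measure.map (fun p : Fin 2 → ℝ => ![Tx (p 0), Tyx (p 0) (p 1)]) N0 = N1 := by
  have hr0' : r0 ^ 2 < 1 := (sq_lt_one_iff_abs_lt_one _).2 (abs_lt.2 hr0)
  have hr1' : r1 ^ 2 < 1 := (sq_lt_one_iff_abs_lt_one _).2 (abs_lt.2 hr1)
  set A := knotheRosenblattMatrix σ0x σ0y r0 σ1x σ1y r1
  have hT : (fun p : Fin 2 → ℝ => ![Tx (p 0), Tyx (p 0) (p 1)]) =
      fun p => A *ᵥ p + (![μ1x, μ1y] - A *ᵥ ![μ0x, μ0y]) := by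
    funext p
    ext i
    have : √(1 - r0 ^ 2) ≠ 0 := (Real.sqrt_pos.2 (by linarith)).ne'
    fin_cases i <;> simp [A, knotheRosenblattMatrix, hTx, hTyx, vecHead, vecTail] <;>
      field_simp <;> ring
  rw [hN0, hN1, hT, map_mvGaussian_mulVec_add (det_knotheRosenblattMatrix_ne_zero hσ0x.ne'
    hσ0y.ne' hr0' hσ1x.ne' hσ1y.ne' hr1'), add_sub_cancel]
  exact congrArg _ (knotheRosenblattMatrix_mul_bivariateCov_mul_transpose hσ0x.ne' hσ0y.ne' hr0'
    hr1'.le)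
end

section
/- Let ρ0 and ρ1 be probability measures on ℝ × ℝ, with first marginals ν0 and ν1 respectively. Assume ν0 is atomless, and assume that for ν0-almost every x, the conditional cumulative distribution function y ↦ F_{0}(y | x) of the second coordinate of ρ0 given first coordinate x is continuous. Let F_0 be the cumulative distribution function of ν0, Q_1 the generalized inverse of the cumulative distribution function of ν1, T_1 = Q_1 ∘ F_0, and for each x' ∈ ℝ let Q_{1}(· | x') be the generalized inverse of the conditional cumulative distribution function of the second coordinate of ρ1 given first coordinate x'. Then the pushforward of ρ0 under the map (x, y) ↦ ( T_1(x), Q_{1}( F_{0}(y | x) | T_1(x) ) ) equals ρ1. -/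
/-!
The map is, `ρ0`-a.e., the inverse Rosenblatt transform `(u, v) ↦ (Q₁(u), Q₁(v | Q₁(u)))` of `ρ1`
composed with the Rosenblatt transform `(x, y) ↦ (F₀(x), F₀(y | x))` of `ρ0`. The latter sends
`ρ0` to the uniform law on `(0, 1)²` by the probability integral transform, applied to the first
marginal and to each conditional law (this is where continuity of the cdfs is needed); the former
sends the uniform law to `ρ1` because a quantile function pushes the uniform law on `(0, 1)` to its
distribution. Both are instances of one fact about disintegrations: `(x, y) ↦ (T x, S x y)` sends
`μ ⊗ κ` to `ν ⊗ η` whenever `T` sends `μ` to `ν` and each `S x` sends `κ x` to `η (T x)`.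
-/

open MeasureTheory ProbabilityTheory Set Filter Topology

namespace StieltjesFunction

-- Only meaningful for `u ∈ (0, 1)`: elsewhere `sInf` may return its junk value `0`.
noncomputable def quantile (F : StieltjesFunction ℝ) (u : ℝ) : ℝ := sInf {x | u ≤ F x}

variable {F : StieltjesFunction ℝ}

theorem quantile_le_iff (hbot : Tendsto F atBot (𝓝 0)) (htop : Tendsto F atTop (𝓝 1))
    {u : ℝ} (hu : u ∈ Ioo 0 1) (x : ℝ) : F.quantile u ≤ x ↔ u ≤ F x := by
  have hne : {x | u ≤ F x}.Nonempty :=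
    (htop.eventually_const_lt hu.2).exists.imp fun _ h => h.le
  have hbdd : BddBelow {x | u ≤ F x} := by
    obtain ⟨x₀, hx₀⟩ := (hbot.eventually_lt_const hu.1).exists_forall_of_atBot
    exact ⟨x₀, fun x hx => not_lt.1 fun h => (hx₀ x h.le).not_ge hx⟩
  refine ⟨fun h => le_trans ?_ (F.mono h), fun h => csInf_le hbdd h⟩
  -- right continuity: `F` at the infimum is the infimum of `F` to its right
  rw [quantile, ← F.iInf_Ioi_eq]
  refine le_ciInf fun r => ?_
  obtain ⟨s, hs, hsr⟩ := exists_lt_of_csInf_lt hne r.2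
  exact hs.trans (F.mono hsr.le)

theorem apply_quantile (hbot : Tendsto F atBot (𝓝 0)) (htop : Tendsto F atTop (𝓝 1))
    (hcont : Continuous F) {u : ℝ} (hu : u ∈ Ioo 0 1) : F (F.quantile u) = u := by
  refine le_antisymm ?_ ((quantile_le_iff hbot htop hu _).1 le_rfl)
  refine le_of_tendsto (hcont.continuousAt.continuousWithinAt (s := Iio (F.quantile u)))
    (eventually_nhdsWithin_of_forall fun x hx => ?_)
  exact (not_le.1 fun h => (not_le.2 hx) ((quantile_le_iff hbot htop hu x).2 h)).le

theorem continuous_of_measure_singleton (h : ∀ x, F.measure {x} = 0) : Continuous F := by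
  refine continuous_iff_continuousAt.2 fun x => F.mono.continuousAt_iff_leftLim_eq_rightLim.2 ?_
  have hx := h x
  rw [F.measure_singleton, ENNReal.ofReal_eq_zero, sub_nonpos] at hx
  rw [F.rightLim_eq]
  exact le_antisymm (F.mono.leftLim_le le_rfl) hx

end StieltjesFunction

open StieltjesFunction

section Measurability

variable {α : Type*} [MeasurableSpace α] {F : α → StieltjesFunction ℝ}

theorem measurable_stieltjesFunction_uncurry (hF : ∀ x, Measurable fun a => F a x) :
    Measurable fun p : α × ℝ => F p.1 p.2 := by
  refine measurable_of_Iio fun c => ?_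
  -- right continuity: `F a x < c` iff `F a q < c` for some rational `q > x`
  have h : (fun p : α × ℝ => F p.1 p.2) ⁻¹' Iio c
      = ⋃ q : ℚ, {p : α × ℝ | p.2 < q} ∩ {p | F p.1 q < c} := by
    ext ⟨a, x⟩
    simp only [mem_preimage, mem_Iio, mem_iUnion, mem_inter_iff]
    refine ⟨fun hx => ?_, fun ⟨q, hxq, hq⟩ => ((F a).mono hxq.le).trans_lt hq⟩
    have : Nonempty {q : ℚ // x < q} := nonempty_subtype.2 (exists_rat_gt x)
    rw [← (F a).iInf_rat_gt_eq] at hx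
    obtain ⟨q, hq⟩ := exists_lt_of_ciInf_lt hx
    exact ⟨q, q.2, hq⟩
  rw [h]
  exact MeasurableSet.iUnion fun q =>
    (measurableSet_lt measurable_snd measurable_const).inter
      (measurableSet_lt ((hF q).comp measurable_fst) measurable_const)

theorem measurable_indicator_quantile_uncurry (hF : ∀ x, Measurable fun a => F a x)
    (hbot : ∀ a, Tendsto (F a) atBot (𝓝 0)) (htop : ∀ a, Tendsto (F a) atTop (𝓝 1)) :
    Measurable fun p : α × ℝ => (Ioo 0 1).indicator (F p.1).quantile p.2 := by
  refine measurable_of_Iic fun y => ?_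
  have h : (fun p : α × ℝ => (Ioo 0 1).indicator (F p.1).quantile p.2) ⁻¹' Iic y
      = {p | p.2 ∈ Ioo 0 1 ∧ p.2 ≤ F p.1 y} ∪ {p | p.2 ∉ Ioo 0 1 ∧ 0 ≤ y} := by
    ext ⟨a, u⟩
    by_cases hu : u ∈ Ioo 0 1
    · simp only [mem_preimage, indicator_of_mem hu, mem_Iic,
        quantile_le_iff (hbot a) (htop a) hu]
      exact ⟨fun h => Or.inl ⟨hu, h⟩, fun h => h.elim And.right fun h' => absurd hu h'.1⟩
    · simp only [mem_preimage, indicator_of_notMem hu, mem_Iic]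
      exact ⟨fun h => Or.inr ⟨hu, h⟩, fun h => h.elim (fun h' => absurd h'.1 hu) And.right⟩
  rw [h]
  have hIoo : MeasurableSet {p : α × ℝ | p.2 ∈ Ioo 0 1} := measurable_snd measurableSet_Ioo
  exact (hIoo.inter (measurableSet_le measurable_snd ((hF y).comp measurable_fst))).union
    (hIoo.compl.inter (MeasurableSet.const _))

theorem measurable_indicator_quantile {F : StieltjesFunction ℝ}
    (hbot : Tendsto F atBot (𝓝 0)) (htop : Tendsto F atTop (𝓝 1)) :
    Measurable ((Ioo 0 1).indicator F.quantile) :=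
  (measurable_indicator_quantile_uncurry (F := fun _ : Unit => F) (fun _ => measurable_const)
    (fun _ => hbot) (fun _ => htop)).comp (measurable_prodMk_left (x := ()))

end Measurability

noncomputable def uniformIoo : Measure ℝ := volume.restrict (Ioo 0 1)

instance : IsProbabilityMeasure uniformIoo :=
  ⟨by simp [uniformIoo, Real.volume_Ioo]⟩

theorem uniformIoo_Iic {c : ℝ} (hc : c ≤ 1) : uniformIoo (Iic c) = ENNReal.ofReal c := by
  rw [uniformIoo, Measure.restrict_congr_set Ioo_ae_eq_Ioc,
    Measure.restrict_apply measurableSet_Iic, Iic_inter_Ioc_of_le hc, Real.volume_Ioc, sub_zero]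

namespace StieltjesFunction

variable {F : StieltjesFunction ℝ}

theorem map_indicator_quantile_uniformIoo (hbot : Tendsto F atBot (𝓝 0))
    (htop : Tendsto F atTop (𝓝 1)) :
    uniformIoo.map ((Ioo 0 1).indicator F.quantile) = F.measure := by
  have hmeas := measurable_indicator_quantile hbot htop
  have : IsProbabilityMeasure F.measure := F.isProbabilityMeasure hbot htop
  refine Measure.ext_of_Iic _ _ fun x => ?_
  have hpre : (Ioo 0 1).indicator F.quantile ⁻¹' Iic x ∩ Ioo 0 1 = Iic (F x) ∩ Ioo 0 1 := by
    ext u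
    by_cases hu : u ∈ Ioo 0 1
    · simp [quantile_le_iff hbot htop hu, hu]
    · simp [hu]
  rw [Measure.map_apply hmeas measurableSet_Iic, uniformIoo,
    Measure.restrict_apply (hmeas measurableSet_Iic), hpre,
    ← Measure.restrict_apply measurableSet_Iic,
    ← uniformIoo, uniformIoo_Iic (F.mono.ge_of_tendsto htop x),
    F.measure_Iic hbot, sub_zero]

theorem map_measure_eq_uniformIoo (hbot : Tendsto F atBot (𝓝 0))
    (htop : Tendsto F atTop (𝓝 1)) (hcont : Continuous F) :
    F.measure.map F = uniformIoo := by
  have hF : F ∘ (Ioo 0 1).indicator F.quantile =ᵐ[uniformIoo] id := by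
    filter_upwards [ae_restrict_mem measurableSet_Ioo] with u hu
    rw [Function.comp_apply, indicator_of_mem hu, apply_quantile hbot htop hcont hu, id]
  rw [← map_indicator_quantile_uniformIoo hbot htop,
    Measure.map_map F.mono.measurable (measurable_indicator_quantile hbot htop),
    Measure.map_congr hF, Measure.map_id]

end StieltjesFunction

namespace MeasureTheory.Measure

variable {α β γ δ : Type*} [MeasurableSpace α] [MeasurableSpace β] [MeasurableSpace γ]
  [MeasurableSpace δ]

theorem map_compProd_of_map_eq {μ : Measure α} [SFinite μ] {κ : Kernel α γ} [IsSFiniteKernel κ]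
    {ν : Measure β} [SFinite ν] {η : Kernel β δ} [IsSFiniteKernel η]
    {T : α → β} {S : α → γ → δ} (hT : Measurable T) (hS : Measurable (Function.uncurry S))
    (hTμ : μ.map T = ν) (hSκ : ∀ᵐ x ∂μ, (κ x).map (S x) = η (T x)) :
    (μ ⊗ₘ κ).map (fun p => (T p.1, S p.1 p.2)) = ν ⊗ₘ η := by
  have hf : Measurable fun p : α × γ => (T p.1, S p.1 p.2) :=
    (hT.comp measurable_fst).prodMk hS
  ext s hs
  rw [map_apply hf hs, compProd_apply (hf hs), compProd_apply hs, ← hTμ,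
    lintegral_map (η.measurable_kernel_prodMk_left hs) hT]
  refine lintegral_congr_ae (hSκ.mono fun x hx => ?_)
  dsimp only
  rw [← hx, map_apply hS.of_uncurry_left (measurable_prodMk_left hs)]
  rfl

end MeasureTheory.Measure

namespace ProbabilityTheory

variable {α : Type*} [MeasurableSpace α]

noncomputable def condCDFKernel (ρ : Measure (α × ℝ)) : Kernel α ℝ :=
  ⟨fun a => (condCDF ρ a).measure, measurable_measure_condCDF ρ⟩

instance (ρ : Measure (α × ℝ)) : IsMarkovKernel (condCDFKernel ρ) :=
  ⟨fun a => instIsProbabilityMeasureCondCDF ρ a⟩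

theorem fst_compProd_condCDFKernel (ρ : Measure (α × ℝ)) [IsFiniteMeasure ρ] :
    ρ.fst ⊗ₘ condCDFKernel ρ = ρ :=
  congrArg (· ()) (compProd_toKernel (isCondKernelCDF_condCDF ρ))

noncomputable def rosenblatt (ρ : Measure (ℝ × ℝ)) (p : ℝ × ℝ) : ℝ × ℝ :=
  (cdf ρ.fst p.1, condCDF ρ p.1 p.2)

/-- `(u, v) ↦ (x, Q(v | x))` with `x = Q(u)`; sending the complement of `(0, 1)` to `0` in each
coordinate makes it measurable without changing it a.e. for the uniform law. -/
noncomputable def inverseRosenblatt (ρ : Measure (ℝ × ℝ)) (p : ℝ × ℝ) : ℝ × ℝ :=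
  ((Ioo 0 1).indicator (cdf ρ.fst).quantile p.1,
    (Ioo 0 1).indicator (condCDF ρ ((Ioo 0 1).indicator (cdf ρ.fst).quantile p.1)).quantile p.2)

variable (ρ : Measure (ℝ × ℝ))

theorem measurable_rosenblatt : Measurable (rosenblatt ρ) :=
  ((cdf ρ.fst).mono.measurable.comp measurable_fst).prodMk
    (measurable_stieltjesFunction_uncurry (measurable_condCDF ρ))

theorem measurable_inverseRosenblatt : Measurable (inverseRosenblatt ρ) := by
  have hQ := measurable_indicator_quantile (tendsto_cdf_atBot ρ.fst) (tendsto_cdf_atTop ρ.fst)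
  exact (hQ.comp measurable_fst).prodMk
    ((measurable_indicator_quantile_uncurry (measurable_condCDF ρ) (tendsto_condCDF_atBot ρ)
      (tendsto_condCDF_atTop ρ)).comp ((hQ.comp measurable_fst).prodMk measurable_snd))

variable [IsProbabilityMeasure ρ]

theorem map_rosenblatt [NullSingletonClass ρ.fst]
    (hcont : ∀ᵐ x ∂ρ.fst, Continuous (condCDF ρ x)) :
    ρ.map (rosenblatt ρ) = uniformIoo.prod uniformIoo := by
  have hcdf : Continuous (cdf ρ.fst) := (cdf ρ.fst).continuous_of_measure_singleton fun x => by
    rw [measure_cdf]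
    exact measure_singleton x
  have hfst := map_measure_eq_uniformIoo (tendsto_cdf_atBot _) (tendsto_cdf_atTop _) hcdf
  rw [measure_cdf] at hfst
  have hmap := Measure.map_compProd_of_map_eq (κ := condCDFKernel ρ)
    (η := Kernel.const ℝ uniformIoo) (cdf ρ.fst).mono.measurable
    (measurable_stieltjesFunction_uncurry (measurable_condCDF ρ)) hfst
    (hcont.mono fun x hx => map_measure_eq_uniformIoo (tendsto_condCDF_atBot ρ x)
      (tendsto_condCDF_atTop ρ x) hx)
  rw [fst_compProd_condCDFKernel, Measure.compProd_const] at hmap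
  exact hmap

theorem map_inverseRosenblatt :
    (uniformIoo.prod uniformIoo).map (inverseRosenblatt ρ) = ρ := by
  have hQ := measurable_indicator_quantile (tendsto_cdf_atBot ρ.fst) (tendsto_cdf_atTop ρ.fst)
  have hfst := map_indicator_quantile_uniformIoo (tendsto_cdf_atBot ρ.fst) (tendsto_cdf_atTop _)
  rw [measure_cdf] at hfst
  have hmap := Measure.map_compProd_of_map_eq (μ := uniformIoo) (κ := Kernel.const ℝ uniformIoo)
    (ν := ρ.fst) (η := condCDFKernel ρ) (T := (Ioo 0 1).indicator (cdf ρ.fst).quantile)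
    (S := fun u => (Ioo 0 1).indicator
      (condCDF ρ ((Ioo 0 1).indicator (cdf ρ.fst).quantile u)).quantile) hQ
    (measurable_inverseRosenblatt ρ).snd
    hfst (ae_of_all _ fun u => map_indicator_quantile_uniformIoo (tendsto_condCDF_atBot ρ _)
      (tendsto_condCDF_atTop ρ _))
  rw [fst_compProd_condCDFKernel, Measure.compProd_const] at hmap
  exact hmap

end ProbabilityTheory

/-- Two-dimensional Knothe–Rosenblatt rearrangement: if the first marginal of `ρ0` is
atomless and the conditional cdfs of `ρ0` are a.e. continuous, then the lower triangular
map whose first component is the monotone transport `T1 = Q1 ∘ F0` between first marginals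
and whose second component is the monotone transport between the corresponding conditional
distributions pushes `ρ0` forward to `ρ1`. -/
theorem stmt_17 (ρ0 ρ1 : Measure (ℝ × ℝ))
    [IsProbabilityMeasure ρ0] [IsProbabilityMeasure ρ1]
    [NullSingletonClass ρ0.fst]
    (hcont : ∀ᵐ x ∂ρ0.fst, Continuous (fun y => condCDF ρ0 x y))
    (F0 : ℝ → ℝ) (hF0 : ∀ x, F0 x = (ρ0.fst (Iic x)).toReal)
    (F1 : ℝ → ℝ) (hF1 : ∀ x, F1 x = (ρ1.fst (Iic x)).toReal)
    (Q1 : ℝ → ℝ) (hQ1 : ∀ u, Q1 u = sInf {x : ℝ | u ≤ F1 x})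
    (T1 : ℝ → ℝ) (hT1 : ∀ x, T1 x = Q1 (F0 x))
    (Q1cond : ℝ → ℝ → ℝ)
    (hQ1cond : ∀ x' u, Q1cond x' u = sInf {y : ℝ | u ≤ condCDF ρ1 x' y}) :
    Measure.map
        (fun p : ℝ × ℝ => (T1 p.1, Q1cond (T1 p.1) (condCDF ρ0 p.1 p.2))) ρ0 = ρ1 := by
  obtain rfl : F0 = cdf ρ0.fst := funext fun x => by rw [hF0, cdf_eq_real, measureReal_def]
  obtain rfl : F1 = cdf ρ1.fst := funext fun x => by rw [hF1, cdf_eq_real, measureReal_def]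
  obtain rfl : Q1 = (cdf ρ1.fst).quantile := funext hQ1
  obtain rfl : T1 = fun x => (cdf ρ1.fst).quantile (cdf ρ0.fst x) := funext hT1
  obtain rfl : Q1cond = fun x' => (condCDF ρ1 x').quantile := funext fun x' => funext (hQ1cond x')
  have hR := map_rosenblatt ρ0 hcont
  have hIoo : ∀ᵐ q ∂(uniformIoo.prod uniformIoo), q ∈ Ioo 0 1 ×ˢ Ioo 0 1 := by
    rw [uniformIoo, Measure.prod_restrict]
    exact ae_restrict_mem (measurableSet_Ioo.prod measurableSet_Ioo)
  have hae : (fun p : ℝ × ℝ => ((cdf ρ1.fst).quantile (cdf ρ0.fst p.1),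
        (condCDF ρ1 ((cdf ρ1.fst).quantile (cdf ρ0.fst p.1))).quantile (condCDF ρ0 p.1 p.2)))
      =ᵐ[ρ0] inverseRosenblatt ρ1 ∘ rosenblatt ρ0 := by
    filter_upwards [ae_of_ae_map (measurable_rosenblatt ρ0).aemeasurable (hR ▸ hIoo)]
      with p ⟨hu, hv⟩
    simp only [rosenblatt] at hu hv
    simp only [Function.comp_apply, inverseRosenblatt, rosenblatt, indicator_of_mem hu,
      indicator_of_mem hv]
  rw [Measure.map_congr hae, ← Measure.map_map (measurable_inverseRosenblatt ρ1)
    (measurable_rosenblatt ρ0), hR, map_inverseRosenblatt]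
end
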